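/- If β^n ≠ 1, then λ_β^i(k, 0) ≠ 0 for all 0 ≤ k ≤ n, while λ_β^i(n, l) = 0 for all 1 ≤ l ≤ n−1. -/
import Mathlib


/-- Gaussian (q-)binomial coefficients, via the q-Pascal recursion. -/
def qbinom {R : Type*} [CommRing R] (q : R) : ℕ → ℕ → R
  | _, 0 => 1
  | 0, _ + 1 => 0
  | k + 1, p + 1 => qbinom q k (p + 1) + q ^ (k - p) * qbinom q k p

/-- The closed formula for `λ_β^i(k,p)`. -/
noncomputable def lamC {𝕜 : Type*} [Field 𝕜] (γ β : 𝕜) (i : ℤ) (k p : ℕ) : 𝕜 :=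
  qbinom γ k p * γ ^ (-(((k : ℤ) - p) * p))
    * ∏ l ∈ Finset.Icc (p + 1) k, (β - γ ^ ((l : ℤ) - 1 - i))

lemma qbinom_of_lt {R : Type*} [CommRing R] (q : R) : ∀ k p : ℕ, k < p → qbinom q k p = 0
  | 0, _ + 1, _ => rfl
  | k + 1, p + 1, h => by
      rw [qbinom, qbinom_of_lt q k (p + 1) (by omega), qbinom_of_lt q k p (by omega)]
      ring

lemma qbinom_self {R : Type*} [CommRing R] (q : R) : ∀ k : ℕ, qbinom q k k = 1
  | 0 => rfl
  | k + 1 => by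
      rw [qbinom, qbinom_of_lt q k (k + 1) (by omega), qbinom_self q k]
      simp

lemma qbinom_mul {R : Type*} [CommRing R] (q : R) : ∀ k p : ℕ, p ≤ k →
    qbinom q k p * ∏ j ∈ Finset.Icc 1 p, (q ^ j - 1)
      = ∏ j ∈ Finset.Icc (k - p + 1) k, (q ^ j - 1)
  | 0, 0, _ => by simp [qbinom]
  | k + 1, 0, _ => by simp [qbinom]
  | k + 1, p + 1, h => by
      rcases eq_or_lt_of_le (Nat.succ_le_succ_iff.mp h) with rfl | hlt
      · rw [qbinom_self]
        simp
      · have IH1 := qbinom_mul q k (p + 1) hlt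
        have IH2 := qbinom_mul q k p (le_of_lt hlt)
        rw [qbinom]
        have hF : ∏ j ∈ Finset.Icc 1 (p + 1), (q ^ j - 1)
            = (∏ j ∈ Finset.Icc 1 p, (q ^ j - 1)) * (q ^ (p + 1) - 1) :=
          Finset.prod_Icc_succ_top (by omega) _
        have hG1 : Finset.Icc (k - (p + 1) + 1) k = Finset.Icc (k - p) k := by
          congr 1; omega
        have hG2 : ∏ j ∈ Finset.Icc (k - p) k, (q ^ j - 1)
            = (q ^ (k - p) - 1) * ∏ j ∈ Finset.Icc (k - p + 1) k, (q ^ j - 1) := by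
          have h1 : Finset.Icc (k - p) k = insert (k - p) (Finset.Icc (k - p + 1) k) := by
            rw [Finset.Icc_add_one_left_eq_Ioc, Finset.Ioc_insert_left (by omega)]
          rw [h1, Finset.prod_insert (by simp)]
        have hRHS : ∏ j ∈ Finset.Icc (k + 1 - (p + 1) + 1) (k + 1), (q ^ j - 1)
            = (∏ j ∈ Finset.Icc (k - p + 1) k, (q ^ j - 1)) * (q ^ (k + 1) - 1) := by
          have : k + 1 - (p + 1) + 1 = k - p + 1 := by omega
          rw [this]
          exact Finset.prod_Icc_succ_top (by omega) _
        have hq : q ^ (k - p) * q ^ (p + 1) = q ^ (k + 1) := by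
          rw [← pow_add]; congr 1; omega
        rw [hF, hG1, hG2] at IH1
        rw [hRHS, hF]
        linear_combination IH1 + (q ^ (k - p) * (q ^ (p + 1) - 1)) * IH2
          + (∏ j ∈ Finset.Icc (k - p + 1) k, (q ^ j - 1)) * hq

theorem lam_beta_not_root {𝕜 : Type*} [Field 𝕜] [CharZero 𝕜] (n : ℕ) (hn : 1 ≤ n)
    (γ : 𝕜) (hγ : IsPrimitiveRoot γ n) (β : 𝕜) (hβ : β ≠ 0) (hβn : β ^ n ≠ 1) (i : ℤ) :
    (∀ k ≤ n, lamC γ β i k 0 ≠ 0) ∧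
    (∀ l, 1 ≤ l → l ≤ n - 1 → lamC γ β i n l = 0) := by
  have hγ0 : γ ≠ 0 := hγ.ne_zero (by omega)
  have hfac : ∀ m : ℤ, β - γ ^ m ≠ 0 := by
    intro m h
    apply hβn
    have hb : β = γ ^ m := sub_eq_zero.mp h
    rw [hb, ← zpow_natCast, ← zpow_mul, mul_comm, zpow_mul, zpow_natCast, hγ.pow_eq_one,
      one_zpow]
  constructor
  · intro k hk
    unfold lamC
    simp only [Nat.cast_zero, mul_zero, neg_zero, zpow_zero, mul_one, zero_add]
    rw [show qbinom γ k 0 = 1 from by cases k <;> rfl, one_mul]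
    exact Finset.prod_ne_zero_iff.mpr fun j _ => hfac _
  · intro l hl1 hl2
    have hq0 : qbinom γ n l = 0 := by
      have key := qbinom_mul γ n l (by omega)
      have hzero : ∏ j ∈ Finset.Icc (n - l + 1) n, (γ ^ j - 1) = 0 := by
        apply Finset.prod_eq_zero (i := n) (by simp; omega)
        rw [hγ.pow_eq_one]; ring
      rw [hzero] at key
      have hF : ∏ j ∈ Finset.Icc 1 l, (γ ^ j - 1) ≠ 0 := by
        apply Finset.prod_ne_zero_iff.mpr
        intro j hj
        simp only [Finset.mem_Icc] at hj
        exact sub_ne_zero.mpr (hγ.pow_ne_one_of_pos_of_lt (by omega) (by omega))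
      exact (mul_eq_zero.mp key).resolve_right hF
    simp [lamC, hq0]
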